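/- arXiv:2308.10094 — 2 statements merged into one kernel-verified Lean document; each statement's English description precedes it below -/
import Mathlib

section
/- For finite sets Y, X, an action set A, and a loss function L : Y × A → ℝ, define the L-conditional entropy H_L(Y|X) = Σ_x P_X(x) · min_{a ∈ A} E[L(Y,a) | X = x]. Then for any function f : X → Z (so Z = f(X) is a deterministic processing of X), H_L(Y | X) ≤ H_L(Y | f(X)). That is, L-conditional entropy satisfies a data processing inequality: conditioning on more information cannot increase the generalized entropy. -/
theorem Finset.sum_inf'_le_inf'_sum {ι α M : Type*} [AddCommMonoid M] [SemilatticeInf M]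
    [IsOrderedAddMonoid M] (s : Finset ι) (t : Finset α) (ht : t.Nonempty) (g : ι → α → M) :
    ∑ i ∈ s, t.inf' ht (g i) ≤ t.inf' ht (fun a => ∑ i ∈ s, g i a) :=
  Finset.le_inf' ht _ fun _ ha => Finset.sum_le_sum fun i _ => Finset.inf'_le (g i) ha

theorem L_conditional_entropy_data_processing_general
    {Y X Z A : Type} [Fintype Y] [Fintype X] [Fintype Z] [Fintype A]
    [Nonempty A] [DecidableEq Z]
    (p : Y → X → ℝ)
    (L : Y → A → ℝ) (f : X → Z) :
    ∑ x, Finset.univ.inf' Finset.univ_nonempty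
        (fun a => ∑ y, p y x * L y a)
      ≤ ∑ z, Finset.univ.inf' Finset.univ_nonempty
        (fun a => ∑ x ∈ Finset.univ.filter (fun x => f x = z), ∑ y, p y x * L y a) := by
  rw [← Finset.sum_fiberwise Finset.univ f]
  exact Finset.sum_le_sum fun z _ =>
    Finset.sum_inf'_le_inf'_sum _ _ _ fun x a => ∑ y, p y x * L y a

/-- Data processing inequality for the `L`-conditional entropy
`H_L(Y|X) = Σ_x min_{a∈A} Σ_y P(y,x) L(y,a)` (here written with the joint
distribution, which equals `Σ_x P_X(x) min_a E[L(Y,a)|X=x]`): conditioning on a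
deterministic function `f(X)` of `X` cannot decrease the entropy. -/
theorem L_conditional_entropy_data_processing
    {Y X Z A : Type} [Fintype Y] [Fintype X] [Fintype Z] [Fintype A]
    [Nonempty A] [DecidableEq Z]
    (p : Y → X → ℝ) (hp : ∀ y x, 0 ≤ p y x)
    (hsum : ∑ x, ∑ y, p y x = 1)
    (L : Y → A → ℝ) (f : X → Z) :
    ∑ x, Finset.univ.inf' Finset.univ_nonempty
        (fun a => ∑ y, p y x * L y a)
      ≤ ∑ z, Finset.univ.inf' Finset.univ_nonempty
        (fun a => ∑ x ∈ Finset.univ.filter (fun x => f x = z), ∑ y, p y x * L y a) :=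
  L_conditional_entropy_data_processing_general p L f
end

section
/- Consider the restart-in-state verification identity: let err : ℕ → ℝ be bounded, p ∈ ℝ, b ∈ ℕ, and suppose h : ℕ → ℝ satisfies h(δ) = min_{Z ∈ ℕ} [ Σ_{k=0}^{Z} (err(δ + k) − p) ] + h(b + 1) for all δ ≥ 1 (the restart Bellman equation with unit transmission time). Then the transmit condition h(δ + 1) ≥ h(b + 1) is equivalent to min_{Z ∈ ℕ} Σ_{k=0}^{Z} (err(δ + 1 + k) − p) ≥ 0, which in turn (dividing by Z+1 and taking infima) is equivalent to inf_{τ ≥ 1} (1/τ) Σ_{j=0}^{τ−1} err(δ + j + 1) ≥ p. -/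
/-!
The first equivalence is the Bellman equation at `δ + 1` with `h (b + 1)` cancelled. For the
second, with `c j = err (δ + j + 1)`, the average of `c` over `τ ≥ 1` terms is
`p + (1/τ) ∑_{j<τ} (c j - p)`, so an excess partial sum is nonnegative iff the matching average is
at least `p`. A lower bound on the excess sums also bounds the averages below, so both infima are
genuine infima and the pointwise equivalences pass to them.
-/

open Finset

section Averages

variable {c : ℕ → ℝ} {p : ℝ}

lemma one_div_mul_sum_eq_add_one_div_mul_sum_sub {τ : ℕ} (hτ : τ ≠ 0) :
    1 / (τ : ℝ) * ∑ j ∈ range τ, c j = p + 1 / (τ : ℝ) * ∑ j ∈ range τ, (c j - p) := by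
  rw [sum_sub_distrib, sum_const, card_range, nsmul_eq_mul]
  field_simp
  ring

lemma le_one_div_mul_sum_iff_nonneg_sum_sub {τ : ℕ} (hτ : τ ≠ 0) :
    p ≤ 1 / (τ : ℝ) * ∑ j ∈ range τ, c j ↔ 0 ≤ ∑ j ∈ range τ, (c j - p) := by
  have hτ' : (0 : ℝ) < τ := by exact_mod_cast Nat.pos_of_ne_zero hτ
  rw [one_div_mul_sum_eq_add_one_div_mul_sum_sub hτ, le_add_iff_nonneg_right,
    mul_nonneg_iff_of_pos_left (one_div_pos.2 hτ')]

lemma bddBelow_one_div_mul_sum_of_bddBelow_sum_sub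
    (hbdd : BddBelow (Set.range fun Z : ℕ => ∑ k ∈ range (Z + 1), (c k - p))) :
    BddBelow (Set.range fun τ : {τ : ℕ // 1 ≤ τ} =>
      1 / (τ.1 : ℝ) * ∑ j ∈ range τ.1, c j) := by
  obtain ⟨m, hm⟩ := hbdd
  -- each average is `p + S / τ` with `S ≥ m` and `τ ≥ 1`
  refine ⟨p + min m 0, ?_⟩
  rintro _ ⟨⟨τ, hτ⟩, rfl⟩
  obtain ⟨Z, rfl⟩ := Nat.exists_eq_add_of_le' hτ
  have hsum : m ≤ ∑ k ∈ range (Z + 1), (c k - p) := hm ⟨Z, rfl⟩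
  have hτ' : (1 : ℝ) ≤ (Z + 1 : ℕ) := by exact_mod_cast hτ
  dsimp only
  rw [one_div_mul_sum_eq_add_one_div_mul_sum_sub Z.succ_ne_zero, add_le_add_iff_left,
    one_div, inv_mul_eq_div]
  calc min m 0 ≤ min m 0 / (Z + 1 : ℕ) := by
        rw [le_div_iff₀ (by positivity)]
        nlinarith [min_le_right m 0]
    _ ≤ _ := by gcongr; exact (min_le_left m 0).trans hsum

lemma zero_le_iInf_sum_sub_iff_le_iInf_one_div_mul_sum
    (hbdd : BddBelow (Set.range fun Z : ℕ => ∑ k ∈ range (Z + 1), (c k - p))) :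
    (0 ≤ ⨅ Z : ℕ, ∑ k ∈ range (Z + 1), (c k - p)) ↔
      p ≤ ⨅ τ : {τ : ℕ // 1 ≤ τ}, 1 / (τ.1 : ℝ) * ∑ j ∈ range τ.1, c j := by
  rw [le_ciInf_iff hbdd, le_ciInf_iff (bddBelow_one_div_mul_sum_of_bddBelow_sum_sub hbdd)]
  constructor
  · rintro h ⟨τ, hτ⟩
    obtain ⟨Z, rfl⟩ := Nat.exists_eq_add_of_le' hτ
    exact (le_one_div_mul_sum_iff_nonneg_sum_sub Z.succ_ne_zero).2 (h Z)
  · intro h Z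
    exact (le_one_div_mul_sum_iff_nonneg_sum_sub Z.succ_ne_zero).1 (h ⟨Z + 1, le_add_self⟩)

end Averages

theorem restart_in_state_threshold_general
    (err : ℕ → ℝ) (p : ℝ) (b : ℕ) (h : ℕ → ℝ)
    (hBellman : ∀ δ : ℕ, 1 ≤ δ →
      h δ = (⨅ Z : ℕ, ∑ k ∈ Finset.range (Z + 1), (err (δ + k) - p)) + h (b + 1))
    (δ : ℕ)
    (hbb : BddBelow (Set.range fun Z : ℕ =>
      ∑ k ∈ Finset.range (Z + 1), (err (δ + 1 + k) - p))) :
    (h (b + 1) ≤ h (δ + 1) ↔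
      0 ≤ ⨅ Z : ℕ, ∑ k ∈ Finset.range (Z + 1), (err (δ + 1 + k) - p)) ∧
    ((0 ≤ ⨅ Z : ℕ, ∑ k ∈ Finset.range (Z + 1), (err (δ + 1 + k) - p)) ↔
      p ≤ ⨅ τ : {τ : ℕ // 1 ≤ τ},
        (1 / (τ.1 : ℝ)) * ∑ j ∈ Finset.range τ.1, err (δ + j + 1)) := by
  refine ⟨?_, ?_⟩
  · rw [hBellman (δ + 1) le_add_self]
    exact le_add_iff_nonneg_left _
  · simpa only [Nat.add_right_comm δ 1] using
      zero_le_iInf_sum_sub_iff_le_iInf_one_div_mul_sum (c := fun j => err (δ + 1 + j)) hbb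

/-- Restart-in-state verification identity: if `h` satisfies the restart
Bellman equation `h(δ) = inf_{Z∈ℕ} Σ_{k=0}^{Z} (err(δ+k) − p) + h(b+1)` for all
`δ ≥ 1` (unit transmission time), then the transmit condition
`h(δ+1) ≥ h(b+1)` is equivalent to `inf_Z Σ_{k=0}^{Z} (err(δ+1+k) − p) ≥ 0`,
which is equivalent to `inf_{τ≥1} (1/τ) Σ_{j<τ} err(δ+j+1) ≥ p`. -/
theorem restart_in_state_threshold
    (err : ℕ → ℝ) (C : ℝ) (hC : ∀ n, |err n| ≤ C) (p : ℝ) (b : ℕ) (h : ℕ → ℝ)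
    (hBellman : ∀ δ : ℕ, 1 ≤ δ →
      h δ = (⨅ Z : ℕ, ∑ k ∈ Finset.range (Z + 1), (err (δ + k) - p)) + h (b + 1))
    (δ : ℕ)
    (hbb : BddBelow (Set.range fun Z : ℕ =>
      ∑ k ∈ Finset.range (Z + 1), (err (δ + 1 + k) - p))) :
    (h (b + 1) ≤ h (δ + 1) ↔
      0 ≤ ⨅ Z : ℕ, ∑ k ∈ Finset.range (Z + 1), (err (δ + 1 + k) - p)) ∧
    ((0 ≤ ⨅ Z : ℕ, ∑ k ∈ Finset.range (Z + 1), (err (δ + 1 + k) - p)) ↔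
      p ≤ ⨅ τ : {τ : ℕ // 1 ≤ τ},
        (1 / (τ.1 : ℝ)) * ∑ j ∈ Finset.range τ.1, err (δ + j + 1)) :=
  restart_in_state_threshold_general err p b h hBellman δ hbb
end
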